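/- arXiv:2212.07463 — 3 statements merged into one kernel-verified Lean document; each statement's English description precedes it below -/
import Mathlib

section
/- For r ≥ ρ_E(s) = (s²+1)/2, the function T(s,r) is independent of r, i.e. T(s,r) = T(s, ρ_E(s)) for all r ≥ ρ_E(s), and there exist universal constants K₁, K₂ > 0 such that K₁ s² ≤ T(s,r) ≤ K₂ s² for all r ≥ ρ_H(s) and s ≥ 2. -/
theorem stmt2
    (χ : ℝ → ℝ) (hχ : ContDiff ℝ (⊤ : ℕ∞) χ)
    (hχ01 : ∀ x, 0 ≤ χ x ∧ χ x ≤ 1)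
    (hχ0 : ∀ x ≤ (0:ℝ), χ x = 0) (hχ1 : ∀ x, (1:ℝ) ≤ x → χ x = 1)
    (ρH ρE : ℝ → ℝ) (hρH : ∀ s, ρH s = (s^2 - 1)/2) (hρE : ∀ s, ρE s = (s^2 + 1)/2)
    (ξ : ℝ → ℝ → ℝ) (hξ : ∀ s r, ξ s r = 1 - χ (r - ρH s))
    (T : ℝ → ℝ → ℝ)
    (hT0 : ∀ s, T s 0 = s)
    (hTode : ∀ s r, HasDerivAt (T s) (r * ξ s r / Real.sqrt (s^2 + r^2)) r) :
    (∀ s, 1 ≤ s → ∀ r, ρE s ≤ r → T s r = T s (ρE s)) ∧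
    ∃ K₁ K₂ : ℝ, 0 < K₁ ∧ 0 < K₂ ∧
      ∀ s, 2 ≤ s → ∀ r, ρH s ≤ r → K₁ * s^2 ≤ T s r ∧ T s r ≤ K₂ * s^2 := by
  have hcont : ∀ s, Continuous (T s) :=
    fun s => continuous_iff_continuousAt.mpr fun x => (hTode s x).differentiableAt.continuousAt
  -- Mean value theorem helper
  have hmvt : ∀ s a b : ℝ, a < b → ∃ c ∈ Set.Ioo a b,
      T s b - T s a = (c * ξ s c / Real.sqrt (s^2 + c^2)) * (b - a) := by
    intro s a b hab
    obtain ⟨c, hc, hc'⟩ := exists_hasDerivAt_eq_slope (T s)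
      (fun r => r * ξ s r / Real.sqrt (s^2 + r^2)) hab
      ((hcont s).continuousOn) (fun x _ => hTode s x)
    refine ⟨c, hc, ?_⟩
    rw [hc', div_mul_cancel₀ _ (sub_ne_zero.mpr hab.ne')]
  have hξ01 : ∀ s r, 0 ≤ ξ s r ∧ ξ s r ≤ 1 := by
    intro s r
    rw [hξ]
    constructor
    · linarith [(hχ01 (r - ρH s)).2]
    · linarith [(hχ01 (r - ρH s)).1]
  -- Constancy for r ≥ ρE s
  have hconst : ∀ s r, ρE s ≤ r → T s r = T s (ρE s) := by
    intro s r hr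
    rcases eq_or_lt_of_le hr with h | h
    · rw [h]
    · obtain ⟨c, hc, hc'⟩ := hmvt s (ρE s) r h
      have hξ0 : ξ s c = 0 := by
        rw [hξ, hχ1 (c - ρH s) (by rw [hρH]; have := hc.1; rw [hρE] at this; linarith)]
        ring
      rw [hξ0] at hc'
      simp at hc'
      linarith
  refine ⟨fun s _ r hr => hconst s r hr, 3/8, 2, by norm_num, by norm_num, ?_⟩
  intro s hs r hr
  have hρHpos : 0 < ρH s := by rw [hρH]; nlinarith
  have hρHE : ρH s < ρE s := by rw [hρH, hρE]; linarith
  -- value at ρH s : T s (ρH s) = sqrt (s^2 + (ρH s)^2)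
  have hval : T s (ρH s) = Real.sqrt (s^2 + (ρH s)^2) := by
    have hg : ∀ x : ℝ, 0 < s^2 + x^2 →
        HasDerivAt (fun y => Real.sqrt (s^2 + y^2)) (x / Real.sqrt (s^2 + x^2)) x := by
      intro x hpos
      have h1 : HasDerivAt (fun y : ℝ => s^2 + y^2) (2*x) x := by
        simpa using ((hasDerivAt_pow 2 x).const_add (s^2))
      have h2 := (Real.hasDerivAt_sqrt (ne_of_gt hpos)).comp x h1
      refine h2.congr_deriv ?_
      have hsq : Real.sqrt (s^2 + x^2) ≠ 0 := by positivity
      field_simp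
    set h : ℝ → ℝ := fun y => T s y - Real.sqrt (s^2 + y^2) with hh
    have hcth : Continuous h := (hcont s).sub (Real.continuous_sqrt.comp (by continuity))
    obtain ⟨c, hc, hc'⟩ := exists_hasDerivAt_eq_slope h
      (fun x => x * ξ s x / Real.sqrt (s^2 + x^2) - x / Real.sqrt (s^2 + x^2)) hρHpos
      hcth.continuousOn
      (fun x hx => (hTode s x).sub (hg x (by nlinarith [hx.1])))
    have hξ1 : ξ s c = 1 := by
      rw [hξ, hχ0 (c - ρH s) (by linarith [hc.2]), sub_zero]
    rw [hξ1, mul_one, sub_self] at hc'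
    have h0 : h 0 = 0 := by
      simp only [hh, hT0]
      rw [(by ring : s^2 + (0:ℝ)^2 = s^2), Real.sqrt_sq (by linarith)]
      ring
    have hdiff : h (ρH s) - h 0 = 0 := by
      rcases div_eq_zero_iff.mp hc'.symm with h' | h'
      · exact h'
      · exact absurd h' (by rw [sub_zero]; exact hρHpos.ne')
    have : h (ρH s) = 0 := by linarith
    simpa [hh, sub_eq_zero] using this
  have hsqle : Real.sqrt (s^2 + (ρH s)^2) ≤ s + ρH s := by
    have : s^2 + (ρH s)^2 ≤ (s + ρH s)^2 := by nlinarith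
    calc Real.sqrt (s^2 + (ρH s)^2) ≤ Real.sqrt ((s + ρH s)^2) := Real.sqrt_le_sqrt this
      _ = s + ρH s := Real.sqrt_sq (by linarith)
  have hsqge : ρH s ≤ Real.sqrt (s^2 + (ρH s)^2) := by
    calc ρH s = Real.sqrt ((ρH s)^2) := (Real.sqrt_sq hρHpos.le).symm
      _ ≤ Real.sqrt (s^2 + (ρH s)^2) := Real.sqrt_le_sqrt (by nlinarith)
  -- bounds for r in [ρH s, ρE s]
  have hbdd : ∀ r, ρH s ≤ r → r ≤ ρE s → T s (ρH s) ≤ T s r ∧ T s r ≤ T s (ρH s) + 1 := by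
    intro r hr1 hr2
    rcases eq_or_lt_of_le hr1 with h | h
    · rw [← h]; constructor <;> linarith
    · obtain ⟨c, hc, hc'⟩ := hmvt s (ρH s) r h
      have hc0 : 0 < c := lt_trans hρHpos hc.1
      have hd0 : 0 ≤ c * ξ s c / Real.sqrt (s^2 + c^2) :=
        div_nonneg (mul_nonneg hc0.le (hξ01 s c).1) (Real.sqrt_nonneg _)
      have hd1 : c * ξ s c / Real.sqrt (s^2 + c^2) ≤ 1 := by
        have hsqc : c ≤ Real.sqrt (s^2 + c^2) := by
          calc c = Real.sqrt (c^2) := (Real.sqrt_sq hc0.le).symm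
            _ ≤ Real.sqrt (s^2 + c^2) := Real.sqrt_le_sqrt (by nlinarith)
        have hspos : 0 < Real.sqrt (s^2 + c^2) := lt_of_lt_of_le hc0 hsqc
        rw [div_le_one hspos]
        calc c * ξ s c ≤ c * 1 := by
              exact mul_le_mul_of_nonneg_left (hξ01 s c).2 hc0.le
          _ = c := mul_one c
          _ ≤ Real.sqrt (s^2 + c^2) := hsqc
      constructor
      · nlinarith [mul_nonneg hd0 (by linarith : (0:ℝ) ≤ r - ρH s)]
      · have hrle : r - ρH s ≤ 1 := by rw [hρH, hρE] at *; linarith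
        nlinarith [mul_le_mul hd1 hrle (by linarith) (by norm_num : (0:ℝ) ≤ 1)]
  -- combine
  have key : T s (ρH s) ≤ T s r ∧ T s r ≤ T s (ρH s) + 1 := by
    rcases le_or_gt r (ρE s) with h | h
    · exact hbdd r hr h
    · rw [hconst s r h.le]
      exact hbdd (ρE s) hρHE.le le_rfl
  constructor
  · have : (3:ℝ)/8 * s^2 ≤ ρH s := by rw [hρH]; nlinarith
    linarith [key.1, hsqge, hval.le, hval.ge]
  · have h1 : T s r ≤ Real.sqrt (s^2 + (ρH s)^2) + 1 := by rw [← hval]; exact key.2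
    have h2 : s + ρH s + 1 ≤ 2 * s^2 := by rw [hρH]; nlinarith
    linarith
end

section
/- In the Euclidean-merging domain, where ρ_H(s) ≤ r, t = T(s,r), and t - 1 ≤ r, the energy coefficient satisfies (|r - t| + 1)/r ≲ ζ(s,r)² ≤ ζ(s,r) ≤ 1, i.e. there is a universal constant C such that |r - t| + 1 ≤ C r ζ(s,r)² for all such (s,r). -/
theorem stmt4
    (χ : ℝ → ℝ) (hχ : ContDiff ℝ (⊤ : ℕ∞) χ)
    (hχ01 : ∀ x, 0 ≤ χ x ∧ χ x ≤ 1)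
    (hχ0 : ∀ x ≤ (0:ℝ), χ x = 0) (hχ1 : ∀ x, (1:ℝ) ≤ x → χ x = 1)
    (ρH : ℝ → ℝ) (hρH : ∀ s, ρH s = (s^2 - 1)/2)
    (ξ : ℝ → ℝ → ℝ) (hξ : ∀ s r, ξ s r = 1 - χ (r - ρH s))
    (T : ℝ → ℝ → ℝ)
    (hT0 : ∀ s, T s 0 = s)
    (hTode : ∀ s r, HasDerivAt (T s) (r * ξ s r / Real.sqrt (s^2 + r^2)) r)
    (ζ : ℝ → ℝ → ℝ) (hζnn : ∀ s r, 0 ≤ ζ s r)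
    (hζ : ∀ s r, (ζ s r)^2 = 1 - r^2 * (ξ s r)^2 / (s^2 + r^2)) :
    ∃ C : ℝ, 0 < C ∧ ∀ s, 2 ≤ s → ∀ r, ρH s ≤ r → T s r - 1 ≤ r →
      (|r - T s r| + 1 ≤ C * (r * (ζ s r)^2) ∧ (ζ s r)^2 ≤ ζ s r ∧ ζ s r ≤ 1) := by
  have hξnn : ∀ s r, 0 ≤ ξ s r := by
    intro s r; rw [hξ]; linarith [(hχ01 (r - ρH s)).2]
  have hξle : ∀ s r, ξ s r ≤ 1 := by
    intro s r; rw [hξ]; linarith [(hχ01 (r - ρH s)).1]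
  -- monotonicity of T s on [0, ∞)
  have hTmono : ∀ s, MonotoneOn (T s) (Set.Ici (0:ℝ)) := by
    intro s
    apply monotoneOn_of_deriv_nonneg (convex_Ici 0)
    · exact fun x _ => (hTode s x).continuousAt.continuousWithinAt
    · exact fun x _ => (hTode s x).differentiableAt.differentiableWithinAt
    · intro x hx
      rw [interior_Ici] at hx
      rw [(hTode s x).deriv]
      apply div_nonneg (mul_nonneg (le_of_lt hx) (hξnn s x)) (Real.sqrt_nonneg _)
  -- value of T at ρH s
  have hTρ : ∀ s, 2 ≤ s → T s (ρH s) = (s^2 + 1)/2 := by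
    intro s hs
    have hρnn : 0 ≤ ρH s := by rw [hρH]; nlinarith
    set g : ℝ → ℝ := fun r => T s r - Real.sqrt (s^2 + r^2) with hg
    have hsqrtD : ∀ x : ℝ, HasDerivAt (fun r => Real.sqrt (s^2 + r^2))
        (x / Real.sqrt (s^2 + x^2)) x := by
      intro x
      have hpos : (0:ℝ) < s^2 + x^2 := by nlinarith [sq_nonneg x]
      have h1 : HasDerivAt (fun r : ℝ => s^2 + r^2) (2*x) x := by
        simpa using (hasDerivAt_pow 2 x).const_add (s^2)
      have h2 := (Real.hasDerivAt_sqrt (ne_of_gt hpos)).comp x h1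
      have hsne : Real.sqrt (s^2 + x^2) ≠ 0 := ne_of_gt (Real.sqrt_pos.mpr hpos)
      refine h2.congr_deriv ?_
      ring
    have hgd : ∀ x ∈ Set.Ico (0:ℝ) (ρH s), HasDerivWithinAt g 0 (Set.Ici x) x := by
      intro x hx
      have hξ1 : ξ s x = 1 := by
        rw [hξ, hχ0 _ (by linarith [hx.2])]; ring
      have hD : HasDerivAt g 0 x := by
        have := (hTode s x).sub (hsqrtD x)
        rw [hξ1, mul_one, sub_self] at this
        exact this
      exact hD.hasDerivWithinAt
    have hgc : ContinuousOn g (Set.Icc 0 (ρH s)) := by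
      intro x _
      exact (((hTode s x).continuousAt).sub (hsqrtD x).continuousAt).continuousWithinAt
    have hconst := constant_of_has_deriv_right_zero hgc hgd (ρH s)
      (Set.right_mem_Icc.mpr hρnn)
    have hg0 : g 0 = 0 := by
      simp only [hg, hT0]
      have : Real.sqrt (s^2 + 0^2) = s := by
        rw [show s^2 + 0^2 = s^2 by ring, Real.sqrt_sq (by linarith)]
      rw [this]; ring
    have hsq : s^2 + (ρH s)^2 = ((s^2+1)/2)^2 := by rw [hρH]; ring
    have : T s (ρH s) - Real.sqrt (s^2 + (ρH s)^2) = 0 := by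
      rw [hg0] at hconst; exact hconst
    rw [hsq, Real.sqrt_sq (by positivity)] at this
    linarith
  refine ⟨100, by norm_num, ?_⟩
  intro s hs r hr1 hr2
  have hρnn : 0 ≤ ρH s := by rw [hρH]; nlinarith
  have hr0 : 0 ≤ r := le_trans hρnn hr1
  have hpos : (0:ℝ) < s^2 + r^2 := by nlinarith [sq_nonneg r]
  have hζsq := hζ s r
  have hζle1 : ζ s r ≤ 1 := by
    have h01 : (ζ s r)^2 ≤ 1 := by
      rw [hζsq]
      have : (0:ℝ) ≤ r^2 * (ξ s r)^2 / (s^2 + r^2) := by positivity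
      linarith
    nlinarith [hζnn s r]
  have hζζ : (ζ s r)^2 ≤ ζ s r := by nlinarith [hζnn s r]
  refine ⟨?_, hζζ, hζle1⟩
  by_cases h : ρH s + 1 ≤ r
  · -- far region: ξ = 0, ζ² = 1
    have hξ0 : ξ s r = 0 := by
      rw [hξ, hχ1 _ (by linarith)]; ring
    have hζ2 : (ζ s r)^2 = 1 := by
      rw [hζsq, hξ0]
      simp
    have hTs : s ≤ T s r := by
      have := hTmono s (Set.self_mem_Ici) (Set.mem_Ici.mpr hr0) hr0
      rwa [hT0 s] at this
    rw [hζ2]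
    have hrbig : (s^2 - 1)/2 + 1 ≤ r := by rw [hρH] at h; linarith
    rcases abs_cases (r - T s r) with ⟨h1, _⟩ | ⟨h1, _⟩ <;> rw [h1] <;> nlinarith
  · -- merging region near ρH
    push_neg at h
    have hTge : (s^2 + 1)/2 ≤ T s r := by
      have := hTmono s (Set.mem_Ici.mpr hρnn) (Set.mem_Ici.mpr hr0) hr1
      rwa [hTρ s hs] at this
    have hrT : r - T s r ≤ 0 := by rw [hρH] at h; linarith
    rw [abs_of_nonpos hrT]
    have hTr : T s r - r ≤ 1 := by linarith
    have key : (ζ s r)^2 * (s^2 + r^2) = (s^2 + r^2) - r^2 * (ξ s r)^2 := by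
      rw [hζsq]; field_simp
    have hξsq : (ξ s r)^2 ≤ 1 := by nlinarith [hξnn s r, hξle s r]
    have hr1' : (s^2 - 1)/2 ≤ r := by rw [hρH] at hr1; exact hr1
    have hrlt : r < (s^2 - 1)/2 + 1 := by rw [hρH] at h; exact h
    have h2 : 2 ≤ 100 * (r * (ζ s r)^2) := by
      have h1 : 2 * (s^2 + r^2) ≤ 100 * (r * (ζ s r)^2) * (s^2 + r^2) := by
        nlinarith [key, hξsq, hr0, hs, hr1', hrlt, sq_nonneg (ξ s r),
          mul_nonneg (mul_nonneg hr0 (mul_nonneg hr0 hr0)) (sub_nonneg.mpr hξsq),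
          sq_nonneg (s^2 - 2), sq_nonneg s]
      exact le_of_mul_le_mul_right h1 hpos
    linarith
end

section
/- (Hardy inequality on ℝ³ with weight) Fix η ≥ 0 and let ⟨·⟩ denote a smooth positive weight w(x) with |∇w| ≤ 1 and w ≥ 1. Then for any compactly supported smooth function u on ℝ³, ‖ w^η u / |x| ‖_{L²(ℝ³)} ≲_η ‖ w^η ∇u ‖_{L²(ℝ³)} + ‖ w^{η−1} u ‖_{L²(ℝ³)}·η, and in particular for w ≡ 1 one recovers ‖u/|x|‖_{L²} ≤ 2‖∇u‖_{L²}. -/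
open MeasureTheory

open Set Filter

-- Cauchy–Schwarz for set integrals over Ioi 0
lemma cs_Ioi (f g : ℝ → ℝ) (hf : Continuous f) (hg : Continuous g)
    (hfc : HasCompactSupport f) (hgc : HasCompactSupport g) :
    ∫ t in Ioi (0:ℝ), |f t| * |g t| ≤
      Real.sqrt (∫ t in Ioi (0:ℝ), (f t)^2) * Real.sqrt (∫ t in Ioi (0:ℝ), (g t)^2) := by
  have hpq : Real.HolderConjugate 2 2 := by constructor <;> norm_num
  have hfm : MemLp f (ENNReal.ofReal 2) (volume.restrict (Ioi (0:ℝ))) := by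
    have := (hf.memLp_of_hasCompactSupport (p := ENNReal.ofReal 2) (μ := volume) hfc)
    exact this.restrict _
  have hgm : MemLp g (ENNReal.ofReal 2) (volume.restrict (Ioi (0:ℝ))) := by
    have := (hg.memLp_of_hasCompactSupport (p := ENNReal.ofReal 2) (μ := volume) hgc)
    exact this.restrict _
  have H := integral_mul_norm_le_Lp_mul_Lq (μ := volume.restrict (Ioi (0:ℝ))) hpq hfm hgm
  simp only [Real.norm_eq_abs] at H
  have e1 : ∫ t in Ioi (0:ℝ), |f t| ^ (2:ℝ) = ∫ t in Ioi (0:ℝ), (f t)^2 := by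
    refine integral_congr_ae (Eventually.of_forall fun t => ?_)
    show |f t| ^ (2:ℝ) = f t ^ 2
    rw [show ((2:ℝ)) = ((2:ℕ):ℝ) by norm_num, Real.rpow_natCast, sq_abs]
  have e2 : ∫ t in Ioi (0:ℝ), |g t| ^ (2:ℝ) = ∫ t in Ioi (0:ℝ), (g t)^2 := by
    refine integral_congr_ae (Eventually.of_forall fun t => ?_)
    show |g t| ^ (2:ℝ) = g t ^ 2
    rw [show ((2:ℝ)) = ((2:ℕ):ℝ) by norm_num, Real.rpow_natCast, sq_abs]
  rw [e1, e2] at H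
  refine H.trans (le_of_eq ?_)
  rw [Real.sqrt_eq_rpow, Real.sqrt_eq_rpow]

lemma hardy1d (g : ℝ → ℝ) (hg : ContDiff ℝ 1 g) (hc : HasCompactSupport g) :
    ∫ t in Ioi (0:ℝ), (g t)^2 ≤ 4 * ∫ t in Ioi (0:ℝ), (t * deriv g t)^2 := by
  have hgc : Continuous g := hg.continuous
  have hg' : Continuous (deriv g) := hg.continuous_deriv le_rfl
  have hc' : HasCompactSupport (deriv g) := hc.deriv
  have hcsq : HasCompactSupport (fun t => (g t)^2) := by
    have : (fun t => (g t)^2) = g * g := by funext t; simp [pow_two]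
    rw [this]; exact hc.mul_left
  have hctg : HasCompactSupport (fun t => t * deriv g t) := by
    have : (fun t : ℝ => t * deriv g t) = (fun t : ℝ => t) * deriv g := rfl
    rw [this]; exact hc'.mul_left
  have hctgg : HasCompactSupport (fun t => t * g t * deriv g t) := by
    have : (fun t : ℝ => t * g t * deriv g t) = (fun t : ℝ => t * g t) * deriv g := rfl
    rw [this]; exact hc'.mul_left
  have hctg2 : HasCompactSupport (fun t => (t * deriv g t)^2) := by
    have : (fun t : ℝ => (t * deriv g t)^2) = (fun t : ℝ => t * deriv g t * t) * deriv g := by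
      funext t; simp [pow_two]; ring
    rw [this]; exact hc'.mul_left
  set A := ∫ t in Ioi (0:ℝ), (g t)^2 with hA
  set B := ∫ t in Ioi (0:ℝ), (t * deriv g t)^2 with hB
  have hA0 : 0 ≤ A := setIntegral_nonneg measurableSet_Ioi fun t _ => sq_nonneg _
  have hB0 : 0 ≤ B := setIntegral_nonneg measurableSet_Ioi fun t _ => sq_nonneg _
  -- derivative of φ t = t * g t ^ 2
  have hderiv : ∀ t : ℝ, HasDerivAt (fun s => s * g s ^ 2)
      (g t ^ 2 + t * (2 * g t * deriv g t)) t := by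
    intro t
    have h1 : HasDerivAt g (deriv g t) t := (hg.differentiable one_ne_zero t).hasDerivAt
    have h2 : HasDerivAt (fun s => g s ^ 2) (2 * g t ^ 1 * deriv g t) t := h1.pow 2
    have : HasDerivAt (fun s => s * g s ^ 2) (1 * g t ^ 2 + t * (2 * g t ^ 1 * deriv g t)) t :=
      (hasDerivAt_id t).mul h2
    convert this using 1
    simp only [pow_one, id_eq, one_mul]
  -- eventual vanishing
  obtain ⟨R, hR⟩ := hc.isCompact.isBounded.subset_closedBall 0
  have hvanish : ∀ t : ℝ, R < |t| → g t = 0 := by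
    intro t ht
    by_contra h
    have : t ∈ tsupport g := subset_tsupport g h
    have := hR this
    simp only [Metric.mem_closedBall, Real.dist_eq, sub_zero] at this
    linarith
  have htend : Tendsto (fun s => s * g s ^ 2) atTop (nhds 0) := by
    refine Tendsto.congr' ?_ tendsto_const_nhds
    filter_upwards [eventually_gt_atTop (max R 0)] with s hs
    have : g s = 0 := hvanish s (by
      rw [abs_of_pos (lt_of_le_of_lt (le_max_right _ _) hs)]
      exact lt_of_le_of_lt (le_max_left _ _) hs)
    simp [this]
  -- integrability
  have hint1 : Integrable (fun t => (g t)^2) (volume.restrict (Ioi (0:ℝ))) :=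
    ((hgc.pow 2).integrable_of_hasCompactSupport hcsq).restrict
  have hint2 : Integrable (fun t => t * g t * deriv g t) (volume.restrict (Ioi (0:ℝ))) :=
    (((continuous_id.mul hgc).mul hg').integrable_of_hasCompactSupport hctgg).restrict
  have hint3 : Integrable (fun t => (t * deriv g t)^2) (volume.restrict (Ioi (0:ℝ))) :=
    (((continuous_id.mul hg').pow 2).integrable_of_hasCompactSupport hctg2).restrict
  have hint2' : Integrable (fun t => t * (2 * g t * deriv g t)) (volume.restrict (Ioi (0:ℝ))) :=
    (hint2.const_mul 2).congr (Eventually.of_forall fun t => by ring)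
  -- FTC
  have key : ∫ t in Ioi (0:ℝ), (g t ^ 2 + t * (2 * g t * deriv g t)) = 0 - (0 * g 0 ^ 2) :=
    integral_Ioi_of_hasDerivAt_of_tendsto
      ((hderiv 0).continuousAt.continuousWithinAt) (fun x _ => hderiv x)
      (hint1.add hint2') htend
  have key2 : A = -(2 * ∫ t in Ioi (0:ℝ), t * g t * deriv g t) := by
    have hadd : ∫ t in Ioi (0:ℝ), (g t ^ 2 + t * (2 * g t * deriv g t))
        = A + ∫ t in Ioi (0:ℝ), (t * (2 * g t * deriv g t)) :=
      integral_add hint1 hint2'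
    have h2 : ∫ t in Ioi (0:ℝ), (t * (2 * g t * deriv g t))
        = 2 * ∫ t in Ioi (0:ℝ), t * g t * deriv g t := by
      rw [← integral_const_mul]
      exact integral_congr_ae (Eventually.of_forall fun t => by ring)
    have hkey := key
    rw [hadd, h2] at hkey
    simp only [zero_mul, sub_zero, zero_sub, neg_zero] at hkey
    linarith
  -- Cauchy–Schwarz step
  have habs : |∫ t in Ioi (0:ℝ), t * g t * deriv g t|
      ≤ ∫ t in Ioi (0:ℝ), |g t| * |t * deriv g t| := by
    have h0 := norm_integral_le_integral_norm (μ := volume.restrict (Ioi (0:ℝ)))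
      (fun t => t * g t * deriv g t)
    simp only [Real.norm_eq_abs] at h0
    refine h0.trans (le_of_eq ?_)
    refine integral_congr_ae (Eventually.of_forall fun t => ?_)
    show |t * g t * deriv g t| = |g t| * |t * deriv g t|
    rw [← abs_mul]
    congr 1
    ring
  have hCS2 : ∫ t in Ioi (0:ℝ), |g t| * |t * deriv g t|
      ≤ Real.sqrt A * Real.sqrt B :=
    cs_Ioi g (fun t => t * deriv g t) hgc (continuous_id.mul hg') hc hctg
  have hCS : A ≤ 2 * (Real.sqrt A * Real.sqrt B) := by
    have h1 : -(∫ t in Ioi (0:ℝ), t * g t * deriv g t)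
        ≤ |∫ t in Ioi (0:ℝ), t * g t * deriv g t| := neg_le_abs _
    have h2 := habs.trans hCS2
    linarith [key2]
  nlinarith [sq_nonneg (Real.sqrt A - 2 * Real.sqrt B), Real.sq_sqrt hA0, Real.sq_sqrt hB0]

open Metric in
lemma polar3 (F : EuclideanSpace ℝ (Fin 3) → ENNReal) (hF : Measurable F) :
    ∫⁻ x, F x = ∫⁻ ω : sphere (0 : EuclideanSpace ℝ (Fin 3)) 1,
      (∫⁻ t in Ioi (0:ℝ), ENNReal.ofReal (t^2) * F (t • (ω : EuclideanSpace ℝ (Fin 3))))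
        ∂((volume : Measure (EuclideanSpace ℝ (Fin 3))).toSphere) := by
  let E := EuclideanSpace ℝ (Fin 3)
  let μ : Measure E := volume
  have hdim : Module.finrank ℝ E - 1 = 2 := by
    simp [E, finrank_euclideanSpace_fin]
  have hcont : Continuous fun p : sphere (0:E) 1 × Ioi (0:ℝ) => (p.2 : ℝ) • (p.1 : E) := by
    fun_prop
  have hmeas : Measurable fun p : sphere (0:E) 1 × Ioi (0:ℝ) => F ((p.2 : ℝ) • (p.1 : E)) := by
    have := hF.comp hcont.measurable
    simpa [Function.comp_def] using this
  have h0 : ∫⁻ x, F x ∂μ = ∫⁻ x : ({0}ᶜ : Set E), F x ∂(μ.comap Subtype.val) := by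
    rw [lintegral_subtype_comap (measurableSet_singleton (0:E)).compl,
      restrict_compl_singleton]
  have h1 := (Measure.measurePreserving_homeomorphUnitSphereProd μ).lintegral_comp hmeas
  have h2 : ∀ x : ({0}ᶜ : Set E),
      F (((homeomorphUnitSphereProd E x).2 : ℝ) • ((homeomorphUnitSphereProd E x).1 : E))
        = F x := by
    intro x
    congr 1
    simp [homeomorphUnitSphereProd, smul_inv_smul₀ (norm_ne_zero_iff.2 x.2)]
  rw [h0, ← lintegral_congr h2, h1]
  rw [lintegral_prod _ hmeas.aemeasurable, hdim]
  refine lintegral_congr fun ω => ?_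
  -- now : ∫⁻ t : Ioi 0, F (t • ω) ∂(volumeIoiPow 2) = ∫⁻ t in Ioi 0, ofReal (t^2) * F (t • ω)
  rw [Measure.volumeIoiPow]
  have hd : Measurable fun r : Ioi (0:ℝ) => ENNReal.ofReal ((r : ℝ) ^ 2) :=
    (measurable_subtype_coe.pow_const 2).ennreal_ofReal
  have hG : Measurable fun t : Ioi (0:ℝ) => F ((t : ℝ) • (ω : E)) := by
    have hco : Continuous fun t : Ioi (0:ℝ) => (t : ℝ) • (ω : E) := by fun_prop
    have := hF.comp hco.measurable
    simpa [Function.comp_def] using this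
  rw [lintegral_withDensity_eq_lintegral_mul _ hd hG]
  have key := lintegral_subtype_comap (μ := (volume : Measure ℝ)) (measurableSet_Ioi (a := (0:ℝ)))
    (fun t : ℝ => ENNReal.ofReal (t^2) * F (t • (ω : E)))
  simp only [Pi.mul_apply] at key ⊢
  rw [← key]

open Metric in
lemma hardy3d (u : EuclideanSpace ℝ (Fin 3) → ℝ) (hu : ContDiff ℝ (⊤ : ℕ∞) u)
    (hc : HasCompactSupport u) :
    ∫⁻ x, ENNReal.ofReal ((u x / ‖x‖)^2)
      ≤ 4 * ∫⁻ x, ENNReal.ofReal (‖fderiv ℝ u x‖^2) := by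
  have huc : Continuous u := hu.continuous
  have hfd : Continuous (fderiv ℝ u) := hu.continuous_fderiv (by simp)
  have hF1 : Measurable fun x : EuclideanSpace ℝ (Fin 3) => ENNReal.ofReal ((u x / ‖x‖)^2) :=
    (((huc.measurable).div continuous_norm.measurable).pow_const 2).ennreal_ofReal
  have hF2 : Measurable fun x : EuclideanSpace ℝ (Fin 3) => ENNReal.ofReal (‖fderiv ℝ u x‖^2) :=
    ((hfd.norm.measurable).pow_const 2).ennreal_ofReal
  rw [polar3 _ hF1, polar3 _ hF2]
  rw [← lintegral_const_mul' _ _ (by norm_num : (4:ENNReal) ≠ ⊤)]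
  refine lintegral_mono fun ω => ?_
  -- per-ray
  set g : ℝ → ℝ := fun t => u (t • (ω : EuclideanSpace ℝ (Fin 3))) with hgdef
  have hω : ‖(ω : EuclideanSpace ℝ (Fin 3))‖ = 1 := by
    have := ω.2
    rwa [mem_sphere_zero_iff_norm] at this
  have hg : ContDiff ℝ 1 g :=
    (hu.of_le (by simp)).comp ((contDiff_id (E := ℝ)).smul contDiff_const)
  have hgcs : HasCompactSupport g := by
    obtain ⟨R, hR⟩ := hc.isCompact.isBounded.subset_closedBall 0
    refine HasCompactSupport.intro (isCompact_Icc (a := -R) (b := R)) fun t ht => ?_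
    show u (t • (ω : EuclideanSpace ℝ (Fin 3))) = 0
    refine image_eq_zero_of_notMem_tsupport (fun hmem => ht ?_)
    have := hR hmem
    simp only [mem_closedBall, dist_zero_right, norm_smul, hω, mul_one, Real.norm_eq_abs] at this
    exact ⟨neg_le_of_abs_le this, le_of_abs_le this⟩
  have hd : ∀ t : ℝ, HasDerivAt g (fderiv ℝ u (t • (ω : EuclideanSpace ℝ (Fin 3)))
      (ω : EuclideanSpace ℝ (Fin 3))) t := by
    intro t
    have hu' := (hu.differentiable (by simp) (t • (ω : EuclideanSpace ℝ (Fin 3)))).hasFDerivAt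
    have hs : HasDerivAt (fun s : ℝ => s • (ω : EuclideanSpace ℝ (Fin 3)))
        (ω : EuclideanSpace ℝ (Fin 3)) t := by
      simpa using (hasDerivAt_id t).smul_const (ω : EuclideanSpace ℝ (Fin 3))
    exact hu'.comp_hasDerivAt t hs
  have hderiv_eq : ∀ t : ℝ, deriv g t = fderiv ℝ u (t • (ω : EuclideanSpace ℝ (Fin 3)))
      (ω : EuclideanSpace ℝ (Fin 3)) := fun t => (hd t).deriv
  have hderiv_le : ∀ t : ℝ, |deriv g t| ≤ ‖fderiv ℝ u (t • (ω : EuclideanSpace ℝ (Fin 3)))‖ := by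
    intro t
    rw [hderiv_eq t]
    calc |fderiv ℝ u (t • (ω : EuclideanSpace ℝ (Fin 3))) (ω : EuclideanSpace ℝ (Fin 3))|
        ≤ ‖fderiv ℝ u (t • (ω : EuclideanSpace ℝ (Fin 3)))‖ * ‖(ω : EuclideanSpace ℝ (Fin 3))‖ :=
          (fderiv ℝ u _).le_opNorm _
      _ = ‖fderiv ℝ u (t • (ω : EuclideanSpace ℝ (Fin 3)))‖ := by rw [hω, mul_one]
  have hg' : Continuous (deriv g) := hg.continuous_deriv le_rfl
  have hgc2 : HasCompactSupport (fun t => (g t)^2) := by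
    have : (fun t => (g t)^2) = g * g := by funext t; simp [pow_two]
    rw [this]; exact hgcs.mul_left
  have hgc3 : HasCompactSupport (fun t => (t * deriv g t)^2) := by
    have : (fun t : ℝ => (t * deriv g t)^2) = (fun t : ℝ => t * deriv g t * t) * deriv g := by
      funext t; simp [pow_two]; ring
    rw [this]; exact hgcs.deriv.mul_left
  have hint1 : Integrable (fun t => (g t)^2) (volume.restrict (Ioi (0:ℝ))) :=
    ((hg.continuous.pow 2).integrable_of_hasCompactSupport hgc2).restrict
  have hint3 : Integrable (fun t => (t * deriv g t)^2) (volume.restrict (Ioi (0:ℝ))) :=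
    (((continuous_id.mul hg').pow 2).integrable_of_hasCompactSupport hgc3).restrict
  calc ∫⁻ t in Ioi (0:ℝ), ENNReal.ofReal (t^2)
          * ENNReal.ofReal ((u (t • (ω : EuclideanSpace ℝ (Fin 3)))
            / ‖t • (ω : EuclideanSpace ℝ (Fin 3))‖)^2)
      = ∫⁻ t in Ioi (0:ℝ), ENNReal.ofReal ((g t)^2) := by
        refine setLIntegral_congr_fun measurableSet_Ioi (fun t ht => ?_)
        rw [← ENNReal.ofReal_mul (sq_nonneg t)]
        congr 1
        rw [norm_smul, hω, mul_one, Real.norm_eq_abs, abs_of_pos ht, div_pow,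
          mul_div_cancel₀ _ (pow_ne_zero 2 (ne_of_gt (mem_Ioi.mp ht)))]
    _ = ENNReal.ofReal (∫ t in Ioi (0:ℝ), (g t)^2) := by
        rw [ofReal_integral_eq_lintegral_ofReal hint1
          (Eventually.of_forall fun t => sq_nonneg _)]
    _ ≤ ENNReal.ofReal (4 * ∫ t in Ioi (0:ℝ), (t * deriv g t)^2) :=
        ENNReal.ofReal_le_ofReal (hardy1d g hg hgcs)
    _ = 4 * ENNReal.ofReal (∫ t in Ioi (0:ℝ), (t * deriv g t)^2) := by
        rw [ENNReal.ofReal_mul (by norm_num)]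
        norm_num
    _ = 4 * ∫⁻ t in Ioi (0:ℝ), ENNReal.ofReal ((t * deriv g t)^2) := by
        rw [ofReal_integral_eq_lintegral_ofReal hint3
          (Eventually.of_forall fun t => sq_nonneg _)]
    _ ≤ 4 * ∫⁻ t in Ioi (0:ℝ), ENNReal.ofReal (t^2)
          * ENNReal.ofReal (‖fderiv ℝ u (t • (ω : EuclideanSpace ℝ (Fin 3)))‖^2) := by
        gcongr with t
        rw [← ENNReal.ofReal_mul (sq_nonneg t)]
        refine ENNReal.ofReal_le_ofReal ?_
        rw [mul_pow]
        refine mul_le_mul_of_nonneg_left ?_ (sq_nonneg t)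
        rw [← sq_abs (deriv g t)]
        exact pow_le_pow_left₀ (abs_nonneg _) (hderiv_le t) 2

lemma hardy_final (u : EuclideanSpace ℝ (Fin 3) → ℝ) (hu : ContDiff ℝ (⊤ : ℕ∞) u)
    (hc : HasCompactSupport u) :
    Real.sqrt (∫ x, (u x / ‖x‖)^2) ≤ 2 * Real.sqrt (∫ x, ‖fderiv ℝ u x‖^2) := by
  have huc : Continuous u := hu.continuous
  have hfd : Continuous (fderiv ℝ u) := hu.continuous_fderiv (by simp)
  have hfdc : HasCompactSupport fun x => ‖fderiv ℝ u x‖^2 :=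
    (hc.fderiv (𝕜 := ℝ)).comp_left (g := fun v : EuclideanSpace ℝ (Fin 3) →L[ℝ] ℝ => ‖v‖^2) (by simp)
  have hint2 : Integrable (fun x => ‖fderiv ℝ u x‖^2) :=
    (hfd.norm.pow 2).integrable_of_hasCompactSupport hfdc
  have hL2 : ∫⁻ x, ENNReal.ofReal (‖fderiv ℝ u x‖^2)
      = ENNReal.ofReal (∫ x, ‖fderiv ℝ u x‖^2) :=
    (ofReal_integral_eq_lintegral_ofReal hint2 (Eventually.of_forall fun x => sq_nonneg _)).symm
  have hmain := hardy3d u hu hc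
  rw [hL2] at hmain
  have hfin : (4 : ENNReal) * ENNReal.ofReal (∫ x, ‖fderiv ℝ u x‖^2) ≠ ⊤ :=
    ENNReal.mul_ne_top (by norm_num) ENNReal.ofReal_ne_top
  have h1 : ∫ x, (u x / ‖x‖)^2
      = (∫⁻ x, ENNReal.ofReal ((u x / ‖x‖)^2)).toReal := by
    rw [integral_eq_lintegral_of_nonneg_ae (f := fun x => (u x / ‖x‖)^2) (Eventually.of_forall fun x => sq_nonneg _)
      (((huc.measurable.div continuous_norm.measurable).pow_const 2).aestronglyMeasurable :
        AEStronglyMeasurable (fun x => (u x / ‖x‖)^2) volume)]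
  have hB0 : 0 ≤ ∫ x, ‖fderiv ℝ u x‖^2 := integral_nonneg fun x => sq_nonneg _
  have h2 : (∫⁻ x, ENNReal.ofReal ((u x / ‖x‖)^2)).toReal
      ≤ 4 * ∫ x, ‖fderiv ℝ u x‖^2 := by
    have := ENNReal.toReal_mono hfin hmain
    rwa [ENNReal.toReal_mul, ENNReal.toReal_ofReal hB0, show ((4:ENNReal)).toReal = 4 by norm_num]
      at this
  rw [h1]
  calc Real.sqrt (∫⁻ x, ENNReal.ofReal ((u x / ‖x‖)^2)).toReal
      ≤ Real.sqrt (4 * ∫ x, ‖fderiv ℝ u x‖^2) := Real.sqrt_le_sqrt h2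
    _ = 2 * Real.sqrt (∫ x, ‖fderiv ℝ u x‖^2) := by
        rw [Real.sqrt_mul (by norm_num : (0:ℝ) ≤ 4),
          show Real.sqrt 4 = 2 by
            rw [show (4:ℝ) = 2^2 by norm_num, Real.sqrt_sq (by norm_num : (0:ℝ) ≤ 2)]]

lemma cs_E3 (f g : EuclideanSpace ℝ (Fin 3) → ℝ) (hf : Continuous f) (hg : Continuous g)
    (hfc : HasCompactSupport f) (hgc : HasCompactSupport g)
    (hf0 : ∀ x, 0 ≤ f x) (hg0 : ∀ x, 0 ≤ g x) :
    ∫ x, f x * g x ≤ Real.sqrt (∫ x, (f x)^2) * Real.sqrt (∫ x, (g x)^2) := by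
  have hpq : Real.HolderConjugate 2 2 := by constructor <;> norm_num
  have hfm : MemLp f (ENNReal.ofReal 2) volume :=
    hf.memLp_of_hasCompactSupport hfc
  have hgm : MemLp g (ENNReal.ofReal 2) volume :=
    hg.memLp_of_hasCompactSupport hgc
  have H := integral_mul_norm_le_Lp_mul_Lq (μ := volume) hpq hfm hgm
  simp only [Real.norm_eq_abs] at H
  have e0 : ∫ x, f x * g x = ∫ x, |f x| * |g x| := by
    refine integral_congr_ae (Eventually.of_forall fun x => ?_)
    show f x * g x = |f x| * |g x|
    rw [abs_of_nonneg (hf0 x), abs_of_nonneg (hg0 x)]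
  have e1 : ∫ x, |f x| ^ (2:ℝ) = ∫ x, (f x)^2 := by
    refine integral_congr_ae (Eventually.of_forall fun x => ?_)
    show |f x| ^ (2:ℝ) = f x ^ 2
    rw [show ((2:ℝ)) = ((2:ℕ):ℝ) by norm_num, Real.rpow_natCast, sq_abs]
  have e2 : ∫ x, |g x| ^ (2:ℝ) = ∫ x, (g x)^2 := by
    refine integral_congr_ae (Eventually.of_forall fun x => ?_)
    show |g x| ^ (2:ℝ) = g x ^ 2
    rw [show ((2:ℝ)) = ((2:ℕ):ℝ) by norm_num, Real.rpow_natCast, sq_abs]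
  rw [e1, e2] at H
  rw [e0]
  refine H.trans (le_of_eq ?_)
  rw [Real.sqrt_eq_rpow, Real.sqrt_eq_rpow]

lemma minkowski_E3 (f g : EuclideanSpace ℝ (Fin 3) → ℝ) (hf : Continuous f) (hg : Continuous g)
    (hfc : HasCompactSupport f) (hgc : HasCompactSupport g)
    (hf0 : ∀ x, 0 ≤ f x) (hg0 : ∀ x, 0 ≤ g x) :
    Real.sqrt (∫ x, (f x + g x)^2)
      ≤ Real.sqrt (∫ x, (f x)^2) + Real.sqrt (∫ x, (g x)^2) := by
  have hif : Integrable (fun x => (f x)^2) :=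
    (hf.pow 2).integrable_of_hasCompactSupport
      (hfc.comp_left (g := fun r : ℝ => r^2) (by simp) : HasCompactSupport (fun x => (f x)^2))
  have hig : Integrable (fun x => (g x)^2) :=
    (hg.pow 2).integrable_of_hasCompactSupport
      (hgc.comp_left (g := fun r : ℝ => r^2) (by simp) : HasCompactSupport (fun x => (g x)^2))
  have hifg : Integrable (fun x => f x * g x) :=
    (hf.mul hg).integrable_of_hasCompactSupport (hgc.mul_left)
  have hF0 : 0 ≤ ∫ x, (f x)^2 := integral_nonneg fun x => sq_nonneg _
  have hG0 : 0 ≤ ∫ x, (g x)^2 := integral_nonneg fun x => sq_nonneg _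
  have h1 : Integrable (fun x => (f x)^2 + 2 * (f x * g x)) := hif.add (hifg.const_mul 2)
  have hexp : ∫ x, (f x + g x)^2
      = (∫ x, (f x)^2) + 2 * (∫ x, f x * g x) + ∫ x, (g x)^2 := by
    have heq : ∀ x : EuclideanSpace ℝ (Fin 3),
        (f x + g x)^2 = ((f x)^2 + 2 * (f x * g x)) + (g x)^2 := fun x => by ring
    rw [integral_congr_ae (Eventually.of_forall heq), integral_add h1 hig,
      integral_add hif (hifg.const_mul 2), integral_const_mul]
  have hCS := cs_E3 f g hf hg hfc hgc hf0 hg0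
  have key : ∫ x, (f x + g x)^2
      ≤ (Real.sqrt (∫ x, (f x)^2) + Real.sqrt (∫ x, (g x)^2))^2 := by
    rw [hexp]
    have e1 : (Real.sqrt (∫ x, (f x)^2))^2 = ∫ x, (f x)^2 := Real.sq_sqrt hF0
    have e2 : (Real.sqrt (∫ x, (g x)^2))^2 = ∫ x, (g x)^2 := Real.sq_sqrt hG0
    nlinarith [hCS]
  calc Real.sqrt (∫ x, (f x + g x)^2)
      ≤ Real.sqrt ((Real.sqrt (∫ x, (f x)^2) + Real.sqrt (∫ x, (g x)^2))^2) :=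
        Real.sqrt_le_sqrt key
    _ = _ := Real.sqrt_sq (by positivity)

theorem stmt9 :
    (∀ η : ℝ, 0 ≤ η → ∃ C : ℝ, 0 < C ∧
      ∀ (w u : EuclideanSpace ℝ (Fin 3) → ℝ),
        ContDiff ℝ (⊤ : ℕ∞) w → (∀ x, 1 ≤ w x) → (∀ x, ‖fderiv ℝ w x‖ ≤ 1) →
        ContDiff ℝ (⊤ : ℕ∞) u → HasCompactSupport u →
        Real.sqrt (∫ x, (w x ^ η * u x / ‖x‖)^2)
          ≤ C * (Real.sqrt (∫ x, (w x ^ η * ‖fderiv ℝ u x‖)^2)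
                 + η * Real.sqrt (∫ x, (w x ^ (η - 1) * u x)^2))) ∧
    -- classical 3D Hardy inequality (case w ≡ 1) with sharp constant 2
    (∀ u : EuclideanSpace ℝ (Fin 3) → ℝ, ContDiff ℝ (⊤ : ℕ∞) u → HasCompactSupport u →
      Real.sqrt (∫ x, (u x / ‖x‖)^2) ≤ 2 * Real.sqrt (∫ x, ‖fderiv ℝ u x‖^2)) := by
  refine ⟨?_, hardy_final⟩
  intro η hη
  refine ⟨2, by norm_num, ?_⟩
  intro w u hw hw1 hwd hu hc
  have hw0 : ∀ x, (0:ℝ) < w x := fun x => lt_of_lt_of_le one_pos (hw1 x)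
  have hwne : ∀ x, w x ≠ 0 := fun x => ne_of_gt (hw0 x)
  -- the auxiliary function v = w^η * u
  have hvsmooth : ContDiff ℝ (⊤ : ℕ∞) (fun x => w x ^ η * u x) :=
    (hw.rpow_const_of_ne hwne).mul hu
  have hvc : HasCompactSupport (fun x => w x ^ η * u x) := by
    have e : (fun x => w x ^ η * u x) = (fun x => w x ^ η) * u := rfl
    rw [e]; exact hc.mul_left
  have hHardy := hardy_final _ hvsmooth hvc
  -- pointwise bound on the derivative of v
  have hbound : ∀ x, ‖fderiv ℝ (fun x => w x ^ η * u x) x‖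
      ≤ w x ^ η * ‖fderiv ℝ u x‖ + η * (w x ^ (η - 1) * |u x|) := by
    intro x
    have hwd' : HasFDerivAt w (fderiv ℝ w x) x := (hw.differentiable (by simp) x).hasFDerivAt
    have hwη' : HasFDerivAt (fun y => w y ^ η) ((η * w x ^ (η - 1)) • fderiv ℝ w x) x :=
      hwd'.rpow_const (Or.inl (hwne x))
    have hud : HasFDerivAt u (fderiv ℝ u x) x := (hu.differentiable (by simp) x).hasFDerivAt
    have hmul := hwη'.mul hud
    rw [show (fun x => w x ^ η * u x) = (fun y => w y ^ η) * u from rfl, hmul.fderiv]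
    refine (norm_add_le _ _).trans ?_
    have e1 : ‖(w x ^ η) • fderiv ℝ u x‖ = w x ^ η * ‖fderiv ℝ u x‖ := by
      rw [norm_smul, Real.norm_eq_abs, abs_of_nonneg (Real.rpow_nonneg (hw0 x).le η)]
    have e2 : ‖u x • ((η * w x ^ (η - 1)) • fderiv ℝ w x)‖
        ≤ η * (w x ^ (η - 1) * |u x|) := by
      rw [norm_smul, norm_smul, Real.norm_eq_abs, Real.norm_eq_abs,
        abs_of_nonneg (mul_nonneg hη (Real.rpow_nonneg (hw0 x).le _))]
      calc |u x| * (η * w x ^ (η - 1) * ‖fderiv ℝ w x‖)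
          ≤ |u x| * (η * w x ^ (η - 1) * 1) := by
            refine mul_le_mul_of_nonneg_left ?_ (abs_nonneg _)
            exact mul_le_mul_of_nonneg_left (hwd x)
              (mul_nonneg hη (Real.rpow_nonneg (hw0 x).le _))
        _ = η * (w x ^ (η - 1) * |u x|) := by ring
    exact add_le_add (le_of_eq e1) e2
  -- continuity / compact support of the two bound terms
  have hwηc : Continuous fun x => w x ^ η :=
    hw.continuous.rpow_const (fun x => Or.inl (hwne x))
  have hwη1c : Continuous fun x => w x ^ (η - 1) :=
    hw.continuous.rpow_const (fun x => Or.inl (hwne x))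
  have hfd : Continuous (fderiv ℝ u) := hu.continuous_fderiv (by simp)
  have hfcont : Continuous fun x => w x ^ η * ‖fderiv ℝ u x‖ := hwηc.mul hfd.norm
  have hgcont : Continuous fun x => η * (w x ^ (η - 1) * |u x|) :=
    continuous_const.mul (hwη1c.mul hu.continuous.abs)
  have hfc : HasCompactSupport fun x => w x ^ η * ‖fderiv ℝ u x‖ := by
    have h0 : HasCompactSupport fun x => ‖fderiv ℝ u x‖ :=
      (hc.fderiv (𝕜 := ℝ)).comp_left (g := fun v : EuclideanSpace ℝ (Fin 3) →L[ℝ] ℝ => ‖v‖)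
        norm_zero
    have e : (fun x => w x ^ η * ‖fderiv ℝ u x‖)
        = (fun x => w x ^ η) * (fun x => ‖fderiv ℝ u x‖) := rfl
    rw [e]; exact h0.mul_left
  have hgc : HasCompactSupport fun x => η * (w x ^ (η - 1) * |u x|) := by
    have h0 : HasCompactSupport fun x => |u x| := hc.comp_left (g := abs) abs_zero
    have e : (fun x => η * (w x ^ (η - 1) * |u x|))
        = (fun x => η * w x ^ (η - 1)) * (fun x => |u x|) := by
      funext x; show η * (w x ^ (η - 1) * |u x|) = η * w x ^ (η - 1) * |u x|; ring
    rw [e]; exact h0.mul_left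
  have hf0 : ∀ x, 0 ≤ w x ^ η * ‖fderiv ℝ u x‖ :=
    fun x => mul_nonneg (Real.rpow_nonneg (hw0 x).le _) (norm_nonneg _)
  have hg0 : ∀ x, 0 ≤ η * (w x ^ (η - 1) * |u x|) :=
    fun x => mul_nonneg hη (mul_nonneg (Real.rpow_nonneg (hw0 x).le _) (abs_nonneg _))
  -- monotone step: ∫ ‖fderiv v‖² ≤ ∫ (bound)²
  have hsum_int : Integrable (fun x => (w x ^ η * ‖fderiv ℝ u x‖
      + η * (w x ^ (η - 1) * |u x|))^2) :=
    ((hfcont.add hgcont).pow 2).integrable_of_hasCompactSupport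
      ((hfc.add hgc).comp_left (g := fun r : ℝ => r^2) (by simp) :
          HasCompactSupport (fun x => (w x ^ η * ‖fderiv ℝ u x‖ + η * (w x ^ (η - 1) * |u x|))^2))
  have hmono : ∫ x, ‖fderiv ℝ (fun x => w x ^ η * u x) x‖^2
      ≤ ∫ x, (w x ^ η * ‖fderiv ℝ u x‖ + η * (w x ^ (η - 1) * |u x|))^2 := by
    refine integral_mono_of_nonneg (Eventually.of_forall fun x => sq_nonneg _) hsum_int
      (Eventually.of_forall fun x => ?_)
    exact pow_le_pow_left₀ (norm_nonneg _) (hbound x) 2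
  have hmink := minkowski_E3 _ _ hfcont hgcont hfc hgc hf0 hg0
  -- rewrite the g1 term
  have hg1eq : ∫ x, (η * (w x ^ (η - 1) * |u x|))^2 = η^2 * ∫ x, (w x ^ (η - 1) * u x)^2 := by
    rw [← integral_const_mul]
    refine integral_congr_ae (Eventually.of_forall fun x => ?_)
    show (η * (w x ^ (η - 1) * |u x|))^2 = η^2 * (w x ^ (η - 1) * u x)^2
    rw [mul_pow, mul_pow, mul_pow, sq_abs]
  have hg1sqrt : Real.sqrt (∫ x, (η * (w x ^ (η - 1) * |u x|))^2)
      = η * Real.sqrt (∫ x, (w x ^ (η - 1) * u x)^2) := by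
    rw [hg1eq, Real.sqrt_mul (sq_nonneg η), Real.sqrt_sq hη]
  -- final chain
  calc Real.sqrt (∫ x, (w x ^ η * u x / ‖x‖)^2)
      ≤ 2 * Real.sqrt (∫ x, ‖fderiv ℝ (fun x => w x ^ η * u x) x‖^2) := hHardy
    _ ≤ 2 * Real.sqrt (∫ x, (w x ^ η * ‖fderiv ℝ u x‖ + η * (w x ^ (η - 1) * |u x|))^2) := by
        have := Real.sqrt_le_sqrt hmono
        linarith
    _ ≤ 2 * (Real.sqrt (∫ x, (w x ^ η * ‖fderiv ℝ u x‖)^2)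
          + Real.sqrt (∫ x, (η * (w x ^ (η - 1) * |u x|))^2)) := by linarith [hmink]
    _ = 2 * (Real.sqrt (∫ x, (w x ^ η * ‖fderiv ℝ u x‖)^2)
          + η * Real.sqrt (∫ x, (w x ^ (η - 1) * u x)^2)) := by rw [hg1sqrt]
end
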